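/- arXiv:2212.09299 — 3 statements merged into one kernel-verified Lean document; each statement's English description precedes it below -/
import Mathlib

section
/- With α := (1 - c''/(F'·Ω'))^{-1}, the CDR leakage rate equals α times the emission reduction leakage rate: (1 + (F''·Ω - c'')/(F'·Ω'))^{-1} = α · (1 + (F''·Ω)/(F'·Ω' - c''))^{-1}, given F' > 0, F'' < 0, Ω > 0, Ω' < 0, c'' > 0. -/
-- With `A = a - c + b`, the three factors are `a / A`, `a / (a - c)` and `(a - c) / A`, so the
-- middle denominator cancels.
theorem inv_one_add_sub_div_eq_inv_one_sub_div_mul {K : Type*} [Field K] {a b c : K}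
    (ha : a ≠ 0) (hac : a - c ≠ 0) :
    (1 + (b - c) / a)⁻¹ = (1 - c / a)⁻¹ * (1 + b / (a - c))⁻¹ := by
  rw [one_add_div ha, one_sub_div ha, one_add_div hac, inv_div, inv_div, inv_div,
    div_mul_div_cancel₀ hac]
  ring

theorem cdr_leakage_eq_alpha_mul_emission_leakage_general
    (F' F'' Ω Ω' c'' : ℝ)
    (hF' : F' > 0) (hΩ' : Ω' < 0) (hc'' : c'' > 0)
    (α : ℝ) (hα : α = (1 - c'' / (F' * Ω'))⁻¹) :
    (1 + (F'' * Ω - c'') / (F' * Ω'))⁻¹ = α * (1 + (F'' * Ω) / (F' * Ω' - c''))⁻¹ := by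
  have hA : F' * Ω' < 0 := mul_neg_of_pos_of_neg hF' hΩ'
  rw [hα]
  exact inv_one_add_sub_div_eq_inv_one_sub_div_mul hA.ne (by linarith)

theorem cdr_leakage_eq_alpha_mul_emission_leakage
    (F' F'' Ω Ω' c'' : ℝ)
    (hF' : F' > 0) (hF'' : F'' < 0) (hΩ : Ω > 0) (hΩ' : Ω' < 0) (hc'' : c'' > 0)
    (α : ℝ) (hα : α = (1 - c'' / (F' * Ω'))⁻¹) :
    (1 + (F'' * Ω - c'') / (F' * Ω'))⁻¹ = α * (1 + (F'' * Ω) / (F' * Ω' - c''))⁻¹ :=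
  cdr_leakage_eq_alpha_mul_emission_leakage_general F' F'' Ω Ω' c'' hF' hΩ' hc'' α hα
end

section
/- The CDR leakage rate is strictly smaller than the emission reduction leakage rate: (1 + (F''·Ω - c'')/(F'·Ω'))^{-1} < (1 + (F''·Ω)/(F'·Ω' - c''))^{-1}, assuming F' > 0, F'' < 0, Ω > 0, Ω' < 0, c'' > 0. -/
theorem cdr_leakage_lt_emission_leakage
    (F' F'' Ω Ω' c'' : ℝ)
    (hF' : F' > 0) (hF'' : F'' < 0) (hΩ : Ω > 0) (hΩ' : Ω' < 0) (hc'' : c'' > 0) :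
    (1 + (F'' * Ω - c'') / (F' * Ω'))⁻¹ < (1 + (F'' * Ω) / (F' * Ω' - c''))⁻¹ := by
  have hb : F' * Ω' < 0 := mul_neg_of_pos_of_neg hF' hΩ'
  have ha : F'' * Ω < 0 := mul_neg_of_neg_of_pos hF'' hΩ
  have hs : F'' * Ω + F' * Ω' - c'' < 0 := by linarith
  have hbc : F' * Ω' - c'' < 0 := by linarith
  have hb0 : F' * Ω' ≠ 0 := ne_of_lt hb
  have hbc0 : F' * Ω' - c'' ≠ 0 := ne_of_lt hbc
  have h1 : 1 + (F'' * Ω - c'') / (F' * Ω') = (F'' * Ω + F' * Ω' - c'') / (F' * Ω') := by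
    rw [eq_div_iff hb0, add_mul, div_mul_cancel₀ _ hb0]; ring
  have h2 : 1 + (F'' * Ω) / (F' * Ω' - c'') = (F'' * Ω + F' * Ω' - c'') / (F' * Ω' - c'') := by
    field_simp; ring
  rw [h1, h2, inv_div, inv_div, div_eq_mul_inv, div_eq_mul_inv]
  have hinv : (F'' * Ω + F' * Ω' - c'')⁻¹ < 0 := inv_lt_zero.mpr hs
  have hlt : F' * Ω' - c'' < F' * Ω' := by linarith
  exact mul_lt_mul_of_neg_right hlt hinv
end

section
/- With LR_s := c''/(c'' - F''·Ω), the wedge between optimal CDR subsidy and optimal carbon tax satisfies ς̂/τ̂ = (1 - φ_R)/(1 + φ_E) = 1/(1 - LR_s), where φ_E = -(1 + (F''·Ω)/(F'·Ω' - c''))^{-1} and φ_R = (1 + (F''·Ω - c'')/(F'·Ω'))^{-1}, given F' > 0, F'' < 0, Ω > 0, Ω' < 0, c'' > 0. -/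
theorem subsidy_tax_wedge_eq_supply_leakage
    (F' F'' Ω Ω' c'' F : ℝ)
    (hF' : F' > 0) (hF'' : F'' < 0) (hΩ : Ω > 0) (hΩ' : Ω' < 0) (hc'' : c'' > 0)
    (hF : F > 0)
    (φE φR LRs τ ς : ℝ)
    (hφE : φE = -(1 + (F'' * Ω) / (F' * Ω' - c''))⁻¹)
    (hφR : φR = (1 + (F'' * Ω - c'') / (F' * Ω'))⁻¹)
    (hLRs : LRs = c'' / (c'' - F'' * Ω))
    (hτ : τ = (1 + φE) * (-F * Ω'))
    (hς : ς = (1 - φR) * (-F * Ω')) :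
    ς / τ = (1 - φR) / (1 + φE) ∧ ς / τ = 1 / (1 - LRs) := by
  have hA : F' * Ω' < 0 := mul_neg_of_pos_of_neg hF' hΩ'
  have hB : F'' * Ω < 0 := mul_neg_of_neg_of_pos hF'' hΩ
  have hd1 : F' * Ω' - c'' < 0 := by linarith
  have hd2 : F' * Ω' + F'' * Ω - c'' < 0 := by linarith
  have hCB : c'' - F'' * Ω > 0 := by linarith
  have n1 : F' * Ω' - c'' ≠ 0 := ne_of_lt hd1
  have n2 : F' * Ω' + F'' * Ω - c'' ≠ 0 := ne_of_lt hd2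
  have n3 : F' * Ω' ≠ 0 := ne_of_lt hA
  have n4 : F'' * Ω ≠ 0 := ne_of_lt hB
  have n5 : c'' - F'' * Ω ≠ 0 := ne_of_gt hCB
  have n6 : F'' ≠ 0 := ne_of_lt hF''
  have n7 : Ω ≠ 0 := ne_of_gt hΩ
  have key : 1 + F'' * Ω / (F' * Ω' - c'') = (F' * Ω' + F'' * Ω - c'') / (F' * Ω' - c'') := by
    field_simp; ring
  have h1E : 1 + φE = (F'' * Ω) / (F' * Ω' + F'' * Ω - c'') := by
    rw [hφE, key, inv_div]; field_simp; ring
  have keyR : 1 + (F'' * Ω - c'') / (F' * Ω') = (F' * Ω' + F'' * Ω - c'') / (F' * Ω') := by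
    rw [eq_div_iff n3, add_mul, div_mul_cancel₀ _ n3]; ring
  have h1R : 1 - φR = (F'' * Ω - c'') / (F' * Ω' + F'' * Ω - c'') := by
    rw [hφR, keyR, inv_div]; field_simp; ring
  have hEpos : 1 + φE > 0 := by
    rw [h1E]; exact div_pos_of_neg_of_neg hB hd2
  have hFΩ : -F * Ω' ≠ 0 := ne_of_gt (mul_pos_of_neg_of_neg (by linarith) hΩ')
  have h1 : ς / τ = (1 - φR) / (1 + φE) := by
    rw [hτ, hς, mul_div_mul_right _ _ hFΩ]
  refine ⟨h1, ?_⟩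
  rw [h1, h1E, h1R, hLRs]
  rw [div_div_div_eq]
  field_simp
  ring
end
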